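/- Let μₙ be the standard Gaussian measure on ℝⁿ and A an invertible linear transformation of ℝⁿ with operator norm ‖A‖ > 1. Then the composition operator C_A f = f ∘ A is not bounded on L²(μₙ), i.e., there is no constant C with ‖f ∘ A‖_{L²(μₙ)} ≤ C‖f‖_{L²(μₙ)} for all f in the domain of C_A. -/

import Mathlib

open MeasureTheory Real Metric

open scoped ENNReal NNReal

/-- The standard `n`-dimensional Gaussian measure `dμₙ = (2π)^{-n/2} exp(-‖x‖²/2) dλₙ`. -/
noncomputable def gaussianMeasure (n : ℕ) : Measure (EuclideanSpace ℝ (Fin n)) :=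
  volume.withDensity fun x =>
    ENNReal.ofReal ((2 * Real.pi) ^ (-(n : ℝ) / 2) * Real.exp (-‖x‖ ^ 2 / 2))

/-!
Write `g(ρ) = (2π)^{-n/2} e^{-ρ²/2}` for the Gaussian density at a point of norm `ρ`. Since
`‖A‖ > 1`, there are points `c` for which `‖A c‖ - ‖c‖` is as large as we like. Let `B` be the unit
ball around `c`. Testing `C_A` on the indicator of `A B` gives `μ(B) ≤ C² μ(A B)`. But
`μ(B) ≥ g(‖c‖ + 1) |B|` and `μ(A B) ≤ g(‖A c‖ - ‖A‖) |det A| |B|`, and the ratio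
`g(‖c‖ + 1) / g(‖A c‖ - ‖A‖)` grows without bound.
-/

lemma measure_preimage_le_of_eLpNorm_comp_le {α : Type*} [MeasurableSpace α] {μ : Measure α}
    {g : α → α} {C : ℝ≥0}
    (hC : ∀ f : α → ℂ, Measurable f → MemLp f 2 μ → MemLp (f ∘ g) 2 μ →
      eLpNorm (f ∘ g) 2 μ ≤ C * eLpNorm f 2 μ)
    {s : Set α} (hs : MeasurableSet s) (hgs : MeasurableSet (g ⁻¹' s)) (hμs : μ s ≠ ∞)
    (hμgs : μ (g ⁻¹' s) ≠ ∞) :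
    μ (g ⁻¹' s) ≤ C ^ 2 * μ s := by
  have hcomp : s.indicator (fun _ => (1 : ℂ)) ∘ g = (g ⁻¹' s).indicator fun _ => 1 := rfl
  have h := hC _ (measurable_const.indicator hs) (memLp_indicator_const 2 hs 1 (Or.inr hμs))
    (hcomp ▸ memLp_indicator_const 2 hgs 1 (Or.inr hμgs))
  rw [hcomp, eLpNorm_indicator_const hgs two_ne_zero ENNReal.ofNat_ne_top,
    eLpNorm_indicator_const hs two_ne_zero ENNReal.ofNat_ne_top] at h
  have hsq (x : ℝ≥0∞) : (x ^ (2⁻¹ : ℝ)) ^ 2 = x := by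
    simpa using ENNReal.rpow_inv_natCast_pow two_ne_zero x
  simpa [mul_pow, hsq] using pow_le_pow_left₀ zero_le h 2

noncomputable def gaussianRadial (n : ℕ) (R : ℝ) : ℝ :=
  (2 * π) ^ (-(n : ℝ) / 2) * exp (-R ^ 2 / 2)

section gaussianRadial

variable {n : ℕ}

lemma gaussianRadial_pos (R : ℝ) : 0 < gaussianRadial n R := by
  unfold gaussianRadial; positivity

lemma gaussianRadial_antitoneOn : AntitoneOn (gaussianRadial n) (Set.Ici 0) := by
  intro R hR R' _ h
  unfold gaussianRadial
  gcongr

lemma mul_gaussianRadial_lt {K s m : ℝ} (hs : 1 ≤ s) (hm : s + |K| ≤ m) :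
    K * gaussianRadial n m < gaussianRadial n s := by
  have hgap : |K| ≤ (m ^ 2 - s ^ 2) / 2 := by nlinarith [abs_nonneg K]
  have hK : K < exp ((m ^ 2 - s ^ 2) / 2) :=
    calc K ≤ |K| := le_abs_self K
      _ < |K| + 1 := lt_add_one _
      _ ≤ exp |K| := add_one_le_exp _
      _ ≤ _ := exp_le_exp.2 hgap
  have hsplit : exp (-s ^ 2 / 2) = exp ((m ^ 2 - s ^ 2) / 2) * exp (-m ^ 2 / 2) := by
    rw [← exp_add]; ring_nf
  unfold gaussianRadial
  rw [hsplit, mul_left_comm]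
  gcongr

end gaussianRadial

section gaussianMeasure

variable {n : ℕ} {s : Set (EuclideanSpace ℝ (Fin n))}

lemma gaussianMeasure_eq_withDensity : gaussianMeasure n =
    volume.withDensity fun x => ENNReal.ofReal (gaussianRadial n ‖x‖) := rfl

lemma gaussianMeasure_le_of_le_norm (hs : MeasurableSet s) {R : ℝ} (hR : 0 ≤ R)
    (h : ∀ x ∈ s, R ≤ ‖x‖) :
    gaussianMeasure n s ≤ ENNReal.ofReal (gaussianRadial n R) * volume s := by
  rw [gaussianMeasure_eq_withDensity, withDensity_apply _ hs, ← setLIntegral_const]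
  exact setLIntegral_mono' hs fun x hx => ENNReal.ofReal_le_ofReal <|
    gaussianRadial_antitoneOn hR (hR.trans (h x hx)) (h x hx)

lemma le_gaussianMeasure_of_norm_le (hs : MeasurableSet s) {R : ℝ} (h : ∀ x ∈ s, ‖x‖ ≤ R) :
    ENNReal.ofReal (gaussianRadial n R) * volume s ≤ gaussianMeasure n s := by
  rw [gaussianMeasure_eq_withDensity, withDensity_apply _ hs, ← setLIntegral_const]
  exact setLIntegral_mono' hs fun x hx => ENNReal.ofReal_le_ofReal <|
    gaussianRadial_antitoneOn (norm_nonneg x) ((norm_nonneg x).trans (h x hx)) (h x hx)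

lemma IsCompact.gaussianMeasure_ne_top (hs : IsCompact s) : gaussianMeasure n s ≠ ∞ :=
  ne_top_of_le_ne_top (ENNReal.mul_ne_top ENNReal.ofReal_ne_top hs.measure_lt_top.ne)
    (gaussianMeasure_le_of_le_norm hs.isClosed.measurableSet le_rfl fun x _ => norm_nonneg x)

end gaussianMeasure

lemma ContinuousLinearMap.exists_norm_add_le_norm_apply {E F : Type*} [NormedAddCommGroup E]
    [NormedSpace ℝ E] [NormedAddCommGroup F] [NormedSpace ℝ F] {T : E →L[ℝ] F} (hT : 1 < ‖T‖)
    (d : ℝ) : ∃ c, ‖c‖ + d ≤ ‖T c‖ := by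
  obtain ⟨x, hx, hTx⟩ := T.exists_lt_apply_of_lt_opNorm hT
  have hgap : 0 < ‖T x‖ - ‖x‖ := by linarith
  refine ⟨max 0 (d / (‖T x‖ - ‖x‖)) • x, ?_⟩
  have ht : d ≤ max 0 (d / (‖T x‖ - ‖x‖)) * (‖T x‖ - ‖x‖) :=
    (div_le_iff₀ hgap).1 (le_max_right _ _)
  rw [map_smul, norm_smul, norm_smul, Real.norm_of_nonneg (le_max_left _ _)]
  linarith

lemma ContinuousLinearMap.norm_apply_sub_opNorm_le {E F : Type*} [SeminormedAddCommGroup E]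
    [NormedSpace ℝ E] [SeminormedAddCommGroup F] [NormedSpace ℝ F] (T : E →L[ℝ] F) {c y : E}
    (hy : y ∈ closedBall c 1) : ‖T c‖ - ‖T‖ ≤ ‖T y‖ := by
  have hTcy : ‖T c - T y‖ ≤ ‖T‖ := by
    rw [← map_sub]
    simpa using T.le_opNorm_of_le (mem_closedBall_iff_norm'.1 hy)
  linarith [norm_sub_norm_le (T c) (T y)]

lemma gaussianRadial_le_of_eLpNorm_comp_le {n : ℕ}
    (A : EuclideanSpace ℝ (Fin n) ≃ₗ[ℝ] EuclideanSpace ℝ (Fin n)) {C : ℝ≥0}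
    (hC : ∀ f : EuclideanSpace ℝ (Fin n) → ℂ, Measurable f →
      MemLp f 2 (gaussianMeasure n) → MemLp (f ∘ A) 2 (gaussianMeasure n) →
        eLpNorm (f ∘ A) 2 (gaussianMeasure n) ≤ C * eLpNorm f 2 (gaussianMeasure n))
    (c : EuclideanSpace ℝ (Fin n))
    (hc : ‖LinearMap.toContinuousLinearMap
      (A : EuclideanSpace ℝ (Fin n) →ₗ[ℝ] EuclideanSpace ℝ (Fin n))‖ ≤ ‖A c‖) :
    gaussianRadial n (‖c‖ + 1) ≤
      (C : ℝ) ^ 2 * |LinearMap.det (A : EuclideanSpace ℝ (Fin n) →ₗ[ℝ] EuclideanSpace ℝ (Fin n))| *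
        gaussianRadial n (‖A c‖ - ‖LinearMap.toContinuousLinearMap
          (A : EuclideanSpace ℝ (Fin n) →ₗ[ℝ] EuclideanSpace ℝ (Fin n))‖) := by
  set T := LinearMap.toContinuousLinearMap
    (A : EuclideanSpace ℝ (Fin n) →ₗ[ℝ] EuclideanSpace ℝ (Fin n))
  set D := |LinearMap.det (A : EuclideanSpace ℝ (Fin n) →ₗ[ℝ] EuclideanSpace ℝ (Fin n))|
  set B := closedBall c 1
  have hB : IsCompact B := isCompact_closedBall c 1
  have hBm : MeasurableSet B := measurableSet_closedBall
  have hAB : IsCompact (A '' B) := hB.image T.continuous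
  have hpre : A ⁻¹' (A '' B) = B := A.injective.preimage_image B
  have hlow := le_gaussianMeasure_of_norm_le hBm
    fun x hx => norm_le_of_mem_closedBall hx
  have hup := gaussianMeasure_le_of_le_norm hAB.isClosed.measurableSet (sub_nonneg.2 hc)
    fun _ ⟨y, hy, hx⟩ => hx ▸ T.norm_apply_sub_opNorm_le hy
  have hbound := measure_preimage_le_of_eLpNorm_comp_le hC hAB.isClosed.measurableSet
    (hpre.symm ▸ hBm) hAB.gaussianMeasure_ne_top
    (hpre.symm ▸ hB.gaussianMeasure_ne_top)
  rw [hpre] at hbound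
  have hvol : volume (A '' B) = ENNReal.ofReal D * volume B :=
    Measure.addHaar_image_linearMap volume _ B
  have hchain : ENNReal.ofReal (gaussianRadial n (‖c‖ + 1)) * volume B ≤
      ENNReal.ofReal ((C : ℝ) ^ 2 * D * gaussianRadial n (‖A c‖ - ‖T‖)) * volume B :=
    calc _ ≤ _ := hlow
      _ ≤ _ := hbound
      _ ≤ (C : ℝ≥0∞) ^ 2 *
          (ENNReal.ofReal (gaussianRadial n (‖A c‖ - ‖T‖)) * volume (A '' B)) := by
        gcongr
      _ = _ := by
        rw [hvol, ENNReal.ofReal_mul (by positivity), ENNReal.ofReal_mul (by positivity),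
          ENNReal.ofReal_pow C.coe_nonneg, ENNReal.ofReal_coe_nnreal]
        ring
  exact (ENNReal.ofReal_le_ofReal_iff (mul_nonneg (by positivity) (gaussianRadial_pos _).le)).1
    ((ENNReal.mul_le_mul_iff_left (measure_closedBall_pos volume c one_pos).ne'
      hB.measure_lt_top.ne).1 hchain)

/-- Let `μₙ` be the standard Gaussian measure on `ℝⁿ` and `A` an invertible
linear transformation with operator norm `‖A‖ > 1`. Then the composition operator
`C_A f = f ∘ A` is not bounded on `L²(μₙ)`: there is no finite constant `C` such that
`‖f ∘ A‖₂ ≤ C‖f‖₂` for all `f` in the domain `{f ∈ L²(μₙ) : f ∘ A ∈ L²(μₙ)}` of `C_A`. -/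
theorem stmt_7 {n : ℕ}
    (A : EuclideanSpace ℝ (Fin n) ≃ₗ[ℝ] EuclideanSpace ℝ (Fin n))
    (hA : 1 < ‖LinearMap.toContinuousLinearMap
      (A : EuclideanSpace ℝ (Fin n) →ₗ[ℝ] EuclideanSpace ℝ (Fin n))‖) :
    ¬ ∃ C : ℝ≥0, ∀ f : EuclideanSpace ℝ (Fin n) → ℂ, Measurable f →
        MemLp f 2 (gaussianMeasure n) → MemLp (f ∘ A) 2 (gaussianMeasure n) →
          eLpNorm (f ∘ A) 2 (gaussianMeasure n)
            ≤ (C : ℝ≥0∞) * eLpNorm f 2 (gaussianMeasure n) := by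
  rintro ⟨C, hC⟩
  set T := LinearMap.toContinuousLinearMap
    (A : EuclideanSpace ℝ (Fin n) →ₗ[ℝ] EuclideanSpace ℝ (Fin n))
  set K := (C : ℝ) ^ 2 *
    |LinearMap.det (A : EuclideanSpace ℝ (Fin n) →ₗ[ℝ] EuclideanSpace ℝ (Fin n))|
  obtain ⟨c, hc⟩ := T.exists_norm_add_le_norm_apply hA (1 + |K| + ‖T‖)
  have hKc : gaussianRadial n (‖c‖ + 1) ≤ K * gaussianRadial n (‖T c‖ - ‖T‖) :=
    gaussianRadial_le_of_eLpNorm_comp_le A hC c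
      (show ‖T‖ ≤ ‖T c‖ by linarith [norm_nonneg c, abs_nonneg K])
  exact (mul_gaussianRadial_lt (by linarith [norm_nonneg c]) (by linarith)).not_ge hKc
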